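/- Let g >= 2 and n >= 2. Among all data (r; m_1,...,m_r; n_1,...,n_r) of positive integers with sum_{i=1}^r m_i n_i = n and (r, m_1,...,m_r) not equal to (1;1), the maximum of r + (g-1) * sum_{i=1}^r n_i^2 equals 2 + (g-1) * ((n-1)^2 + 1), attained at r = 2, m_1 = m_2 = 1, n_1 = n - 1, n_2 = 1. Consequently 2*(n^2*(g-1) + 1) - 2*max = 4*(g-1)*(n-1) - 2. -/
import Mathlib

lemma sq_sum_bound {ι : Type*} (a : ι → ℤ) :
    ∀ s : Finset ι, (∀ i ∈ s, 1 ≤ a i) → s.Nonempty →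
      ∑ i ∈ s, a i ^ 2 ≤ (∑ i ∈ s, a i - ((s.card : ℤ) - 1)) ^ 2 + ((s.card : ℤ) - 1) := by
  intro s
  induction s using Finset.cons_induction with
  | empty => intro _ h; exact absurd h (by simp)
  | cons x s hx ih =>
    intro h _
    by_cases hse : s.Nonempty
    · have IH := ih (fun i hi => h i (Finset.mem_cons_of_mem hi)) hse
      have hx1 : 1 ≤ a x := h x (Finset.mem_cons_self x s)
      have hT : (s.card : ℤ) ≤ ∑ i ∈ s, a i := by
        have := Finset.card_nsmul_le_sum s a 1 (fun i hi => h i (Finset.mem_cons_of_mem hi))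
        simpa using this
      rw [Finset.sum_cons, Finset.sum_cons, Finset.card_cons]
      push_cast
      nlinarith [mul_nonneg (sub_nonneg.mpr hx1)
        (by linarith : (0:ℤ) ≤ ∑ i ∈ s, a i - (s.card : ℤ))]
    · have hs0 : s = ∅ := Finset.not_nonempty_iff_eq_empty.mp hse
      subst hs0
      simp

/-- Among nontrivial data `(r; m_1,…,m_r; n_1,…,n_r)` of positive integers with
`∑ m_i n_i = n` and `(r; m) ≠ (1; 1)`, the maximum of `r + (g-1) ∑ n_i²` is
`2 + (g-1)((n-1)² + 1)`, attained at `r = 2, m = (1,1), (n_1,n_2) = (n-1,1)`;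
consequently `2(n²(g-1)+1) - 2·max = 4(g-1)(n-1) - 2`. -/
theorem stmt_13 (g n : ℤ) (hg : 2 ≤ g) (hn : 2 ≤ n) :
    IsGreatest {x : ℤ | ∃ (r : ℕ) (m nn : Fin r → ℤ),
        (∀ i, 0 < m i) ∧ (∀ i, 0 < nn i) ∧ (∑ i, m i * nn i) = n ∧
        ¬(r = 1 ∧ ∀ i, m i = 1) ∧
        x = (r : ℤ) + (g - 1) * ∑ i, (nn i) ^ 2}
      (2 + (g - 1) * ((n - 1) ^ 2 + 1)) ∧
    2 * (n ^ 2 * (g - 1) + 1) - 2 * (2 + (g - 1) * ((n - 1) ^ 2 + 1))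
      = 4 * (g - 1) * (n - 1) - 2 := by
  refine ⟨⟨?_, ?_⟩, by ring⟩
  · refine ⟨2, ![1, 1], ![n - 1, 1], ?_, ?_, ?_, ?_, ?_⟩
    · intro i; fin_cases i <;> norm_num
    · intro i; fin_cases i <;> simp <;> linarith
    · simp [Fin.sum_univ_two]
    · rintro ⟨h, -⟩; exact absurd h (by norm_num)
    · simp [Fin.sum_univ_two]
  · rintro x ⟨r, m, nn, hm, hnn, hsum, hnt, rfl⟩
    have hnn1 : ∀ i, 1 ≤ nn i := fun i => hnn i
    have hm1 : ∀ i, 1 ≤ m i := fun i => hm i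
    have hSn : ∑ i, nn i ≤ n := by
      rw [← hsum]
      apply Finset.sum_le_sum
      intro i _
      nlinarith [hm1 i, hnn1 i]
    match r, m, nn, hm, hnn, hsum, hnt, hnn1, hm1, hSn with
    | 0, m, nn, hm, hnn, hsum, hnt, hnn1, hm1, hSn => simp at hsum; omega
    | 1, m, nn, hm, hnn, hsum, hnt, hnn1, hm1, hSn =>
      have hm2 : 2 ≤ m 0 := by
        by_contra h
        push_neg at h
        refine hnt ⟨rfl, fun i => ?_⟩
        have hi : i = 0 := Fin.fin_one_eq_zero i
        subst hi
        have := hm1 0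
        omega
      simp only [Fin.sum_univ_one] at hsum ⊢
      have h1 : nn 0 ≤ n - 1 := by nlinarith [hnn1 0]
      have h2 : nn 0 ^ 2 ≤ (n - 1) ^ 2 := by nlinarith [hnn1 0]
      have h3 : (g - 1) * nn 0 ^ 2 ≤ (g - 1) * (n - 1) ^ 2 :=
        mul_le_mul_of_nonneg_left h2 (by linarith)
      push_cast
      nlinarith [h3]
    | (k + 2), m, nn, hm, hnn, hsum, hnt, hnn1, hm1, hSn =>
      have hr2 : (2 : ℤ) ≤ ((k + 2 : ℕ) : ℤ) := by push_cast; omega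
      have hrS : ((k + 2 : ℕ) : ℤ) ≤ ∑ i, nn i := by
        have := Finset.card_nsmul_le_sum Finset.univ nn 1 (fun i _ => hnn1 i)
        simpa using this
      have key := sq_sum_bound nn Finset.univ (fun i _ => hnn1 i)
        ⟨0, Finset.mem_univ 0⟩
      simp only [Finset.card_univ, Fintype.card_fin] at key
      set S := ∑ i, nn i with hS
      set R := ((k + 2 : ℕ) : ℤ) with hR
      have h1 : ∑ i, nn i ^ 2 ≤ (S - (R - 1)) ^ 2 + (R - 1) := by
        convert key using 3 <;> push_cast <;> ring
      have hstep1 : (S - R + 1) ^ 2 ≤ (n - R + 1) ^ 2 := by nlinarith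
      have haux1 : (0:ℤ) ≤ (g - 1) * (2 * n - R) - g := by
        nlinarith [mul_nonneg (by linarith : (0:ℤ) ≤ g - 1)
          (by linarith : (0:ℤ) ≤ 2 * n - R - 2)]
      have hstep2 : R + (g - 1) * ((n - R + 1) ^ 2 + (R - 1))
          ≤ 2 + (g - 1) * ((n - 1) ^ 2 + 1) := by
        nlinarith [mul_nonneg (by linarith : (0:ℤ) ≤ R - 2) haux1]
      have hA : (g - 1) * ∑ i, nn i ^ 2 ≤ (g - 1) * ((n - R + 1) ^ 2 + (R - 1)) := by
        apply mul_le_mul_of_nonneg_left _ (by linarith : (0:ℤ) ≤ g - 1)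
        calc ∑ i, nn i ^ 2 ≤ (S - (R - 1)) ^ 2 + (R - 1) := h1
          _ ≤ (n - R + 1) ^ 2 + (R - 1) := by nlinarith
      linarith [hA, hstep2]
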